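/- arXiv:2401.14605 — 2 statements merged into one kernel-verified Lean document; each statement's English description precedes it below -/
import Mathlib

section
/- Let E_0 be the eventual-agreement equivalence relation on the Cantor space 2^ℕ. For all integers n, k > 1, there exists a Borel E_0-coloring of dimension n by k colors that admits no Borel E_0-monochromatic infinite complete section; that is, the strong Borel Ramsey property E_0 →_B (E_0)^n_k fails for all n, k > 1. -/
open Classical

noncomputable section

/-- `Y` is a complete section for `E`: it meets every `E`-class. -/
def IsCompleteSection {X : Type*} (E : X → X → Prop) (Y : Set X) : Prop :=
  ∀ x : X, ∃ y ∈ Y, E x y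

/-- `Y` is an infinite complete section for `E`: it meets every `E`-class in an infinite set. -/
def IsInfiniteCompleteSection {X : Type*} (E : X → X → Prop) (Y : Set X) : Prop :=
  ∀ x : X, {y | y ∈ Y ∧ E x y}.Infinite

/-- A coloring `c` of the `n`-element subsets of single `E`-classes (encoded as a function on
finsets) is `E`-monochromatic on `Y`: for every `x` there is a color `a` such that every
`n`-element subset of `Y` contained in `[x]_E` gets color `a`. -/
def IsMonochromatic {X : Type*} (E : X → X → Prop) (n : ℕ) {k : ℕ}
    (c : Finset X → Fin k) (Y : Set X) : Prop :=
  ∀ x : X, ∃ a : Fin k, ∀ A : Finset X, A.card = n → ↑A ⊆ Y → (∀ y ∈ A, E x y) → c A = a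

/-- `c` is a Borel coloring of dimension `n`: the induced map on `n`-tuples is measurable. -/
def IsBorelColoring {X : Type*} [MeasurableSpace X] (n : ℕ) {k : ℕ}
    (c : Finset X → Fin k) : Prop :=
  Measurable fun v : Fin n → X => c (Set.finite_range v).toFinset

/-- The strong Borel Ramsey property `E →_B (E)^n_k`: every Borel `E`-coloring of dimension
`n` by `k` colors admits a Borel `E`-monochromatic infinite complete section. -/
def StrongBorelRamsey {X : Type*} [MeasurableSpace X] (E : X → X → Prop) (n k : ℕ) : Prop :=
  ∀ c : Finset X → Fin k, IsBorelColoring n c →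
    ∃ Y : Set X, MeasurableSet Y ∧ IsInfiniteCompleteSection E Y ∧ IsMonochromatic E n c Y

/-- The weak Borel Ramsey property `E →*_B (E)^n_k`: every Borel `E`-coloring of dimension
`n` by `k` colors admits a Borel `E`-monochromatic complete section. -/
def WeakBorelRamsey {X : Type*} [MeasurableSpace X] (E : X → X → Prop) (n k : ℕ) : Prop :=
  ∀ c : Finset X → Fin k, IsBorelColoring n c →
    ∃ Y : Set X, MeasurableSet Y ∧ IsCompleteSection E Y ∧ IsMonochromatic E n c Y

/-- `E` is smooth: Borel reducible to equality on a standard Borel space. -/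
def IsSmooth {X : Type*} [MeasurableSpace X] (E : X → X → Prop) : Prop :=
  ∃ (Z : Type) (mZ : MeasurableSpace Z), @StandardBorelSpace Z mZ ∧
    ∃ f : X → Z, @Measurable X Z _ mZ f ∧ ∀ x y : X, E x y ↔ f x = f y

/-- The eventual agreement relation `E₀` on Cantor space `2^ℕ`. -/
def E0 (x y : ℕ → Bool) : Prop := ∃ n : ℕ, ∀ m ≥ n, x m = y m

/-- `Σ_{i<δ(x,y)} x i + Σ_{i<δ(x,y)} y i`, where `δ(x,y)` is the least `n` with
`x m = y m` for all `m ≥ n`; junk value `0` if `x` and `y` are not `E₀`-related. -/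
def colorSum (x y : ℕ → Bool) : ℕ :=
  if h : ∃ n : ℕ, ∀ m ≥ n, x m = y m then
    ((Finset.range (Nat.find h)).sum fun i => (x i).toNat) +
    ((Finset.range (Nat.find h)).sum fun i => (y i).toNat)
  else 0

/-- The coloring `c` of the paper: a pair `{x,y}` of distinct `E₀`-related points gets color
`0` (representing color `1`) if `colorSum x y` is even, and color `1` (representing color `2`)
otherwise. -/
def c0 : Finset (ℕ → Bool) → Fin 2 := fun A =>
  if ∃ x y : ℕ → Bool, x ≠ y ∧ A = {x, y} ∧ E0 x y ∧ Even (colorSum x y) then 0 else 1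

/-- The subrelation `F` of `E₀`: `x F y` iff `x = y` or `c ({x,y}) = 1` (even `colorSum`). -/
def F0 (x y : ℕ → Bool) : Prop := x = y ∨ (E0 x y ∧ Even (colorSum x y))

/-- The map flipping coordinate `0`. -/
def flip0 (x : ℕ → Bool) : ℕ → Bool := fun n => if n = 0 then !(x 0) else x n

/-- Eventual agreement of `X`-valued sequences: the relation `E₀(X)` on `X^ℕ`
(denoted `E₁` when `X` is uncountable). -/
def E1rel {X : Type*} (u v : ℕ → X) : Prop := ∃ N : ℕ, ∀ j ≥ N, u j = v j

/-- `S` is a monochromatic reduction to `E₁` for the coloring `c` of dimension `n`: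
each `S x` is injective, its range is a monochromatic subset of `[x]_E`, and
`x E y ↔ S x E₁ S y`. -/
def IsMonochromaticReduction {X : Type*} (E : X → X → Prop) (n : ℕ) {k : ℕ}
    (c : Finset X → Fin k) (S : X → ℕ → X) : Prop :=
  (∀ x : X, Function.Injective (S x)) ∧
  (∀ x : X, (∀ i : ℕ, E x (S x i)) ∧
    ∃ a : Fin k, ∀ A : Finset X, A.card = n → ↑A ⊆ Set.range (S x) → c A = a) ∧
  (∀ x y : X, E x y ↔ E1rel (S x) (S y))

/-- `c` is an almost transitive coloring of dimension `n` for `E`: for every `m ≥ n`, every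
`A ∈ [X]^m_E` and all `(n-1)`-element subsets `B₁, B₂ ⊆ A`, one has
`c ({z} ∪ B₁) = c ({z} ∪ B₂)` for all but finitely many `z` in the `E`-saturation of `A`
outside `B₁ ∪ B₂`. -/
def AlmostTransitive {X : Type*} (E : X → X → Prop) (n : ℕ) {k : ℕ}
    (c : Finset X → Fin k) : Prop :=
  ∀ m : ℕ, n ≤ m → ∀ A : Finset X, A.card = m → (∀ x ∈ A, ∀ y ∈ A, E x y) →
    ∀ B₁ B₂ : Finset X, B₁ ⊆ A → B₂ ⊆ A → B₁.card = n - 1 → B₂.card = n - 1 →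
      {z : X | (∃ a ∈ A, E a z) ∧ z ∉ B₁ ∪ B₂ ∧ c (insert z B₁) ≠ c (insert z B₂)}.Finite

/-!
Let `F₀ ⊆ E₀` relate sequences differing in an even number of coordinates: it splits every
`E₀`-class into two classes, which are swapped by flipping a single coordinate. Colour an
`n`-set by whether it lies in one `F₀`-class. A monochromatic infinite complete section `Y`
meets each `E₀`-class in an infinite set, which by pigeonhole contains an `F₀`-homogeneous
`n`-set; so the colour of that class is the homogeneous one, and since any two points of `Y`
in the class lie in a common `n`-subset, they are `F₀`-related. The `F₀`-saturation of `Y` is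
then a Borel set `B` mapped onto its complement by every one-coordinate flip. If `B` were
comeagre in a nonempty open set `W`, then for a flip `g` of a far-out coordinate `W ∩ g⁻¹ W`
would be a nonempty open set in which both `B` and its complement are comeagre. So `B` is
meagre, and symmetrically so is its complement, contradicting the Baire category theorem.
-/

open Filter Topology

section IndexTwo

variable {X : Type*}

theorem Set.Infinite.exists_finset_superset_card_eq {S : Set X} (hS : S.Infinite) {t : Finset X}
    (ht : ↑t ⊆ S) {n : ℕ} (hn : t.card ≤ n) : ∃ A : Finset X, t ⊆ A ∧ ↑A ⊆ S ∧ A.card = n := by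
  obtain ⟨u, hu, hucard⟩ := (hS.sdiff t.finite_toSet).exists_subset_card_eq (n - t.card)
  have hdisj : Disjoint t u := Finset.disjoint_left.2 fun _ hat hau => (hu hau).2 hat
  refine ⟨t ∪ u, Finset.subset_union_left, ?_, ?_⟩
  · rw [Finset.coe_union]
    exact Set.union_subset ht (hu.trans Set.sdiff_subset)
  · rw [Finset.card_union_of_disjoint hdisj, hucard]
    omega

structure IsSubrelationOfIndexLeTwo (F E : X → X → Prop) : Prop where
  equivalence_sub : Equivalence F
  equivalence_super : Equivalence E
  le : ∀ ⦃x y⦄, F x y → E x y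
  rel_of_not_rel_of_not_rel : ∀ ⦃x y z⦄, E x y → E x z → ¬F x y → ¬F x z → F y z

def homogeneityColoring (F : X → X → Prop) {k : ℕ} (a b : Fin k) (A : Finset X) : Fin k :=
  if ∀ x ∈ A, ∀ y ∈ A, F x y then a else b

theorem isBorelColoring_homogeneityColoring [MeasurableSpace X] {F : X → X → Prop}
    (hF : MeasurableSet {p : X × X | F p.1 p.2}) (n : ℕ) {k : ℕ} (a b : Fin k) :
    IsBorelColoring n (homogeneityColoring F a b) := by
  unfold IsBorelColoring homogeneityColoring
  simp only [Set.Finite.mem_toFinset, Set.forall_mem_range]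
  refine Measurable.ite ?_ measurable_const measurable_const
  simp only [Set.ofPred_forall]
  refine .iInter fun i => .iInter fun j => ?_
  exact (measurable_pi_apply (X := fun _ : Fin n => X) i).prodMk (measurable_pi_apply j) hF

namespace IsSubrelationOfIndexLeTwo

variable {E F : X → X → Prop}

theorem exists_infinite_subset_pairwise (hFE : IsSubrelationOfIndexLeTwo F E) {x : X}
    {T : Set X} (hT : T.Infinite) (hTx : ∀ w ∈ T, E x w) :
    ∃ T' ⊆ T, T'.Infinite ∧ ∀ u ∈ T', ∀ w ∈ T', F u w := by
  rw [← Set.inter_union_sdiff T {w | F x w}, Set.infinite_union] at hT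
  rcases hT with h | h
  · refine ⟨_, Set.inter_subset_left, h, fun u hu w hw => ?_⟩
    exact hFE.equivalence_sub.trans (hFE.equivalence_sub.symm hu.2) hw.2
  · exact ⟨T \ {w | F x w}, Set.sdiff_subset, h, fun u hu w hw =>
      hFE.rel_of_not_rel_of_not_rel (hTx u hu.1) (hTx w hw.1) hu.2 hw.2⟩

theorem rel_of_isMonochromatic (hFE : IsSubrelationOfIndexLeTwo F E) {n k : ℕ} (hn : 2 ≤ n)
    {a b : Fin k} (hab : a ≠ b) {Y : Set X} (hYinf : IsInfiniteCompleteSection E Y)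
    (hYmono : IsMonochromatic E n (homogeneityColoring F a b) Y) {y z : X} (hy : y ∈ Y)
    (hz : z ∈ Y) (hyz : E y z) : F y z := by
  set T := {w | w ∈ Y ∧ E y w}
  obtain ⟨a', ha'⟩ := hYmono y
  have ha'T (A : Finset X) (hAcard : A.card = n) (hAT : ↑A ⊆ T) :
      homogeneityColoring F a b A = a' :=
    ha' A hAcard (fun w hw => (hAT hw).1) fun w hw => (hAT hw).2
  obtain ⟨T', hT'T, hT'inf, hT'⟩ := hFE.exists_infinite_subset_pairwise (hYinf y) fun w hw => hw.2
  obtain ⟨A₀, hA₀T', hA₀card⟩ := hT'inf.exists_subset_card_eq n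
  have ha : a' = a := by
    rw [← ha'T A₀ hA₀card (hA₀T'.trans hT'T)]
    exact if_pos fun u hu w hw => hT' u (hA₀T' hu) w (hA₀T' hw)
  have hyzT : ↑({y, z} : Finset X) ⊆ T := by
    simp [Set.insert_subset_iff, hy, hz, hyz, hFE.equivalence_super.refl y, T]
  obtain ⟨A, hyzA, hAT, hAcard⟩ :=
    (hYinf y).exists_finset_superset_card_eq hyzT (Finset.card_le_two.trans hn)
  have hA := ha'T A hAcard hAT
  rw [ha, homogeneityColoring] at hA
  have hAF : ∀ u ∈ A, ∀ w ∈ A, F u w := by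
    by_contra h
    exact hab (if_neg h ▸ hA).symm
  exact hAF y (hyzA (by simp)) z (hyzA (by simp))

theorem exists_rel_iff_not_exists_rel (hFE : IsSubrelationOfIndexLeTwo F E) {Y : Set X}
    (hY : IsCompleteSection E Y) (hYF : ∀ ⦃y z⦄, y ∈ Y → z ∈ Y → E y z → F y z) {x x' : X}
    (hxx' : E x x') (hnF : ¬F x x') : (∃ y ∈ Y, F x' y) ↔ ¬∃ y ∈ Y, F x y := by
  have hE := hFE.equivalence_super
  have hF := hFE.equivalence_sub
  constructor
  · rintro ⟨y', hy', hxy'⟩ ⟨y, hy, hxy⟩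
    have hyy' : E y y' := hE.trans (hE.trans (hE.symm (hFE.le hxy)) hxx') (hFE.le hxy')
    exact hnF (hF.trans hxy (hF.trans (hYF hy hy' hyy') (hF.symm hxy')))
  · intro hx
    obtain ⟨y, hy, hxy⟩ := hY x
    by_contra hx'
    exact hnF (hFE.rel_of_not_rel_of_not_rel (hE.symm hxy) (hE.trans (hE.symm hxy) hxx')
      (fun h => hx ⟨y, hy, hF.symm h⟩) fun h => hx' ⟨y, hy, hF.symm h⟩)

end IsSubrelationOfIndexLeTwo

end IndexTwo

section Baire

variable {X : Type*} [TopologicalSpace X] [BaireSpace X] {ι : Type*} {l : Filter ι} [l.NeBot]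

theorem isMeagre_of_preimage_eq_compl {B : Set X} (hB : BaireMeasurableSet B) (g : ι → X ≃ₜ X)
    (hgB : ∀ i, g i ⁻¹' B = Bᶜ) (hg : ∀ x, Tendsto (fun i => g i x) l (𝓝 x)) : IsMeagre B := by
  obtain ⟨W, hWo, hBW⟩ := hB.residualEq_isOpen
  have hBW' := eventuallyEq_set.1 hBW
  rcases W.eq_empty_or_nonempty with rfl | ⟨x, hx⟩
  · exact hBW'.mono fun x hx hxB => (hx.1 hxB).elim
  obtain ⟨i, hi⟩ := ((hg x).eventually (hWo.mem_nhds hx)).exists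
  have hWB : IsMeagre (W \ B) := hBW'.mono fun x hx hxWB => hxWB.2 (hx.2 hxWB.1)
  have hWB' : IsMeagre (g i ⁻¹' W ∩ B) := by
    have := hWB.preimage_of_isOpenMap (g i).continuous (g i).isOpenMap
    rwa [Set.preimage_sdiff, hgB, Set.sdiff_compl] at this
  have hV : IsMeagre (W ∩ g i ⁻¹' W) := (hWB.union hWB').mono fun y hy => by
    by_cases hyB : y ∈ B
    exacts [Or.inr ⟨hy.2, hyB⟩, Or.inl ⟨hy.1, hyB⟩]
  exact (not_isMeagre_of_isOpen (hWo.inter (hWo.preimage (g i).continuous)) ⟨x, hx, hi⟩ hV).elim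

theorem not_baireMeasurableSet_of_preimage_eq_compl [Nonempty X] {B : Set X} (g : ι → X ≃ₜ X)
    (hgB : ∀ i, g i ⁻¹' B = Bᶜ) (hg : ∀ x, Tendsto (fun i => g i x) l (𝓝 x)) :
    ¬BaireMeasurableSet B := fun hB => by
  have hgBc (i : ι) : g i ⁻¹' Bᶜ = Bᶜᶜ := by rw [Set.preimage_compl, hgB]
  have := (isMeagre_of_preimage_eq_compl hB g hgB hg).union
    (isMeagre_of_preimage_eq_compl hB.compl g hgBc hg)
  rw [Set.union_compl_self] at this
  exact not_isMeagre_of_isOpen isOpen_univ Set.univ_nonempty this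

end Baire

section CantorSpace

def flipCoords (s : Finset ℕ) (x : ℕ → Bool) : ℕ → Bool := fun i => if i ∈ s then !x i else x i

@[simp]
theorem flipCoords_empty (x : ℕ → Bool) : flipCoords ∅ x = x := by
  funext i; simp [flipCoords]

theorem flipCoords_flipCoords (s t : Finset ℕ) (x : ℕ → Bool) :
    flipCoords s (flipCoords t x) = flipCoords (symmDiff s t) x := by
  funext i
  by_cases hs : i ∈ s <;> by_cases ht : i ∈ t <;> simp [flipCoords, hs, ht, Finset.mem_symmDiff]

theorem flipCoords_involutive (s : Finset ℕ) : Function.Involutive (flipCoords s) := fun x => by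
  rw [flipCoords_flipCoords, symmDiff_self, Finset.bot_eq_empty, flipCoords_empty]

theorem flipCoords_injective_left (x : ℕ → Bool) : Function.Injective (flipCoords · x) :=
  fun s t h => Finset.ext fun i => by
    have hi := congrFun h i
    by_cases hs : i ∈ s <;> by_cases ht : i ∈ t <;> simp_all [flipCoords]

theorem continuous_flipCoords (s : Finset ℕ) : Continuous (flipCoords s) :=
  continuous_pi fun i => by
    by_cases hi : i ∈ s
    · simp only [flipCoords, hi, if_true]
      exact (continuous_of_discreteTopology (f := not)).comp (continuous_apply i)
    · simpa [flipCoords, hi] using continuous_apply i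

def flipCoordsHomeomorph (s : Finset ℕ) : (ℕ → Bool) ≃ₜ (ℕ → Bool) where
  toEquiv := (flipCoords_involutive s).toPerm
  continuous_toFun := continuous_flipCoords s
  continuous_invFun := continuous_flipCoords s

theorem tendsto_flipCoords_singleton (x : ℕ → Bool) :
    Tendsto (fun m => flipCoords {m} x) atTop (𝓝 x) :=
  tendsto_pi_nhds.2 fun i => tendsto_const_nhds.congr' <|
    (eventually_gt_atTop i).mono fun m hm => by simp [flipCoords, hm.ne]

theorem E0_iff_exists_flipCoords (x y : ℕ → Bool) : E0 x y ↔ ∃ s, y = flipCoords s x := by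
  constructor
  · rintro ⟨n, hn⟩
    refine ⟨{i ∈ Finset.range n | x i ≠ y i}, funext fun i => ?_⟩
    by_cases hi : i < n
    · cases hx : x i <;> cases hy : y i <;> simp [flipCoords, hi, hx, hy]
    · simp [flipCoords, hi, hn i (not_lt.1 hi)]
  · rintro ⟨s, rfl⟩
    refine ⟨s.sup id + 1, fun m hm => ?_⟩
    have hms : m ∉ s := fun h => by have := Finset.le_sup (f := id) h; simp at this; omega
    simp [flipCoords, hms]

theorem E0_flipCoords (s : Finset ℕ) (x : ℕ → Bool) : E0 x (flipCoords s x) :=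
  (E0_iff_exists_flipCoords x _).2 ⟨s, rfl⟩

theorem even_card_symmDiff_iff (s t : Finset ℕ) :
    Even (symmDiff s t).card ↔ (Even s.card ↔ Even t.card) := by
  have h1 : (symmDiff s t).card = (s \ t).card + (t \ s).card := by
    rw [symmDiff_def]
    exact Finset.card_union_of_disjoint disjoint_sdiff_sdiff
  have h2 := Finset.card_sdiff_add_card_inter s t
  have h3 := Finset.card_sdiff_add_card_inter t s
  rw [Finset.inter_comm] at h3
  simp only [Nat.even_iff]
  omega

theorem even_colorSum_flipCoords (s : Finset ℕ) (x : ℕ → Bool) :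
    Even (colorSum x (flipCoords s x)) ↔ Even s.card := by
  have hE : ∃ n, ∀ m ≥ n, x m = flipCoords s x m := E0_flipCoords s x
  have hs : s ⊆ Finset.range (Nat.find hE) := fun i hi => Finset.mem_range.2 <| by
    by_contra h
    simpa [flipCoords, hi] using Nat.find_spec hE i (not_lt.1 h)
  have hterm (i : ℕ) :
      (((x i).toNat + (flipCoords s x i).toNat : ℕ) : ZMod 2) = if i ∈ s then 1 else 0 := by
    by_cases hi : i ∈ s <;> cases hx : x i <;> simp [flipCoords, hi, hx, CharTwo.two_eq_zero]
  rw [colorSum, dif_pos hE, ← Finset.sum_add_distrib, ← ZMod.natCast_eq_zero_iff_even,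
    ← ZMod.natCast_eq_zero_iff_even, Nat.cast_sum, Finset.sum_congr rfl fun i _ => hterm i,
    Finset.sum_ite_mem, Finset.inter_eq_right.2 hs]
  simp

theorem E0_of_F0 {x y : ℕ → Bool} (h : F0 x y) : E0 x y :=
  h.elim (fun hxy => hxy ▸ ⟨0, fun _ _ => rfl⟩) And.left

theorem F0_flipCoords_iff (s : Finset ℕ) (x : ℕ → Bool) :
    F0 x (flipCoords s x) ↔ Even s.card := by
  refine ⟨fun h => h.elim (fun hx => ?_) fun h => (even_colorSum_flipCoords s x).1 h.2,
    fun hs => Or.inr ⟨E0_flipCoords s x, (even_colorSum_flipCoords s x).2 hs⟩⟩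
  simp [flipCoords_injective_left x (hx.symm.trans (flipCoords_empty x).symm)]

theorem F0_flipCoords_flipCoords_iff (s t : Finset ℕ) (x : ℕ → Bool) :
    F0 (flipCoords s x) (flipCoords t x) ↔ (Even s.card ↔ Even t.card) := by
  rw [← symmDiff_symmDiff_cancel_right s t, ← flipCoords_flipCoords, F0_flipCoords_iff,
    even_card_symmDiff_iff, symmDiff_symmDiff_cancel_right]
  exact Iff.comm

theorem F0_iff_exists_flipCoords (x y : ℕ → Bool) :
    F0 x y ↔ ∃ s : Finset ℕ, Even s.card ∧ y = flipCoords s x := by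
  refine ⟨fun h => ?_, fun ⟨s, hs, hy⟩ => hy ▸ (F0_flipCoords_iff s x).2 hs⟩
  obtain ⟨s, rfl⟩ := (E0_iff_exists_flipCoords x y).1 (E0_of_F0 h)
  exact ⟨s, (F0_flipCoords_iff s x).1 h, rfl⟩

theorem isSubrelationOfIndexLeTwo_F0_E0 : IsSubrelationOfIndexLeTwo F0 E0 where
  equivalence_sub := by
    refine ⟨fun x => Or.inl rfl, fun {x y} hxy => ?_, fun {x y z} hxy hyz => ?_⟩
    · obtain ⟨s, hs, rfl⟩ := (F0_iff_exists_flipCoords x y).1 hxy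
      simpa using (F0_flipCoords_flipCoords_iff s ∅ x).2 (by simpa using hs)
    · obtain ⟨s, hs, rfl⟩ := (F0_iff_exists_flipCoords x y).1 hxy
      obtain ⟨t, ht, rfl⟩ := (F0_iff_exists_flipCoords _ z).1 hyz
      rw [flipCoords_flipCoords, F0_flipCoords_iff, even_card_symmDiff_iff]
      exact iff_of_true ht hs
  equivalence_super := by
    refine ⟨fun x => ⟨0, fun _ _ => rfl⟩, fun {x y} hxy => ?_, fun {x y z} hxy hyz => ?_⟩
    · obtain ⟨s, rfl⟩ := (E0_iff_exists_flipCoords x y).1 hxy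
      simpa [flipCoords_involutive s x] using E0_flipCoords s (flipCoords s x)
    · obtain ⟨s, rfl⟩ := (E0_iff_exists_flipCoords x y).1 hxy
      obtain ⟨t, rfl⟩ := (E0_iff_exists_flipCoords _ z).1 hyz
      simpa only [flipCoords_flipCoords] using E0_flipCoords (symmDiff t s) x
  le _ _ := E0_of_F0
  rel_of_not_rel_of_not_rel := by
    intro x y z hxy hxz hnxy hnxz
    obtain ⟨s, rfl⟩ := (E0_iff_exists_flipCoords x y).1 hxy
    obtain ⟨t, rfl⟩ := (E0_iff_exists_flipCoords x z).1 hxz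
    rw [F0_flipCoords_iff] at hnxy hnxz
    exact (F0_flipCoords_flipCoords_iff s t x).2 (iff_of_false hnxy hnxz)

theorem measurableSet_F0 : MeasurableSet {p : (ℕ → Bool) × (ℕ → Bool) | F0 p.1 p.2} := by
  simp only [F0_iff_exists_flipCoords, Set.ofPred_exists]
  exact .iUnion fun s => (MeasurableSet.const _).inter <|
    measurableSet_eq_fun measurable_snd ((continuous_flipCoords s).measurable.comp measurable_fst)

theorem measurableSet_exists_F0 {Y : Set (ℕ → Bool)} (hY : MeasurableSet Y) :
    MeasurableSet {x | ∃ y ∈ Y, F0 x y} := by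
  have : {x | ∃ y ∈ Y, F0 x y} = ⋃ (s : Finset ℕ) (_ : Even s.card), flipCoords s ⁻¹' Y := by
    ext x
    simp [F0_iff_exists_flipCoords, and_comm]
  rw [this]
  exact .iUnion fun s => .iUnion fun _ => (continuous_flipCoords s).measurable hY

end CantorSpace

/-- For all integers `n, k > 1`, the strong Borel Ramsey property `E₀ →_B (E₀)^n_k` fails:
there is a Borel `E₀`-coloring of dimension `n` by `k` colors with no Borel
`E₀`-monochromatic infinite complete section. -/
theorem strong_borel_ramsey_fails_for_E0 :
    ∀ n k : ℕ, 1 < n → 1 < k → ¬ StrongBorelRamsey E0 n k := by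
  intro n k hn hk hSR
  have hF0 := isSubrelationOfIndexLeTwo_F0_E0
  obtain ⟨Y, hYmeas, hYinf, hYmono⟩ := hSR (homogeneityColoring F0 ⟨0, by omega⟩ ⟨1, hk⟩)
    (isBorelColoring_homogeneityColoring measurableSet_F0 n _ _)
  have hYF : ∀ ⦃y z⦄, y ∈ Y → z ∈ Y → E0 y z → F0 y z := fun _ _ =>
    hF0.rel_of_isMonochromatic hn (Fin.ne_of_val_ne zero_ne_one) hYinf hYmono
  have hY : IsCompleteSection E0 Y := fun x => (hYinf x).nonempty
  set B := {x | ∃ y ∈ Y, F0 x y}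
  have hswap (m : ℕ) : flipCoordsHomeomorph {m} ⁻¹' B = Bᶜ :=
    Set.ext fun x => hF0.exists_rel_iff_not_exists_rel hY hYF (E0_flipCoords {m} x)
      ((F0_flipCoords_iff {m} x).not.2 (by simp))
  exact not_baireMeasurableSet_of_preimage_eq_compl _ hswap tendsto_flipCoords_singleton
    (measurableSet_exists_F0 hYmeas).baireMeasurableSet
end
end

section
/- Let E_0 be the eventual-agreement equivalence relation on the Cantor space 2^ℕ. There is a Borel E_0-coloring c of dimension 2 by 2 colors such that there exists no Borel monochromatic reduction to E_1 for c. -/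
open Classical

noncomputable section

/-!
For `E₀`-related `x` and `y`, the parity of `colorSum x y` is the parity of the number of
coordinates where `x` and `y` differ, so it is additive along an `E₀`-class. Hence three points
cannot have pairwise odd parity, and an infinite `c0`-monochromatic set has only even pairs.

Given a reduction `S`, flipping one coordinate of `x` changes the parity of `{x, S x 0}`: the
sequences `S x` and `S (flipAt n x)` eventually share a point, which is at even parity from both
`S x 0` and `S (flipAt n x) 0`, while `x` and `flipAt n x` are at odd parity. So the Borel set
`{x | colorSum x (S x 0) is even}` is exchanged with its complement by every coordinate flip.
No set with the Baire property behaves like this: it would be meagre or comeagre in some basic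
cylinder, and flipping a coordinate outside the support of that cylinder preserves it.
-/

theorem E0_iff_eventuallyEq {x y : ℕ → Bool} : E0 x y ↔ x =ᶠ[Filter.atTop] y :=
  Filter.eventually_atTop.symm

theorem E0_equivalence : Equivalence E0 := by
  refine ⟨fun _ => E0_iff_eventuallyEq.2 .rfl, fun h => ?_, fun h h' => ?_⟩
  · exact E0_iff_eventuallyEq.2 (E0_iff_eventuallyEq.1 h).symm
  · exact E0_iff_eventuallyEq.2 ((E0_iff_eventuallyEq.1 h).trans (E0_iff_eventuallyEq.1 h'))

theorem colorSum_comm (x y : ℕ → Bool) : colorSum x y = colorSum y x := by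
  have hiff : (∃ n : ℕ, ∀ m ≥ n, x m = y m) ↔ ∃ n : ℕ, ∀ m ≥ n, y m = x m := by
    simp only [eq_comm]
  unfold colorSum
  by_cases h : ∃ n : ℕ, ∀ m ≥ n, x m = y m
  · rw [dif_pos h, dif_pos (hiff.1 h), add_comm]
    congr 3 <;> simp only [eq_comm]
  · rw [dif_neg h, dif_neg (hiff.not.1 h)]

def prefixParity (n : ℕ) (x : ℕ → Bool) : ZMod 2 := ∑ i ∈ Finset.range n, ((x i).toNat : ZMod 2)

def colorParity (x y : ℕ → Bool) : ZMod 2 := colorSum x y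

theorem prefixParity_add_prefixParity_of_agree {x y : ℕ → Bool} {k n : ℕ} (hkn : k ≤ n)
    (h : ∀ m ≥ k, x m = y m) :
    prefixParity n x + prefixParity n y = prefixParity k x + prefixParity k y := by
  induction n, hkn using Nat.le_induction with
  | base => rfl
  | succ n hkn ih =>
    simp only [prefixParity, Finset.sum_range_succ] at ih ⊢
    rw [h n hkn, ← ih]
    grind

theorem colorParity_eq_of_agree {x y : ℕ → Bool} {n : ℕ} (h : ∀ m ≥ n, x m = y m) :
    colorParity x y = prefixParity n x + prefixParity n y := by
  have hex : ∃ n, ∀ m ≥ n, x m = y m := ⟨n, h⟩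
  rw [prefixParity_add_prefixParity_of_agree (Nat.find_min' hex h) (Nat.find_spec hex),
    colorParity, colorSum, dif_pos hex]
  simp [prefixParity]

theorem colorParity_add_colorParity {x y z : ℕ → Bool} (hxy : E0 x y) (hyz : E0 y z) :
    colorParity x y + colorParity y z = colorParity x z := by
  obtain ⟨n, hn⟩ := (E0_iff_eventuallyEq.1 hxy).and (E0_iff_eventuallyEq.1 hyz)
    |>.exists_forall_of_atTop
  rw [colorParity_eq_of_agree fun m hm => (hn m hm).1,
    colorParity_eq_of_agree fun m hm => (hn m hm).2,
    colorParity_eq_of_agree fun m hm => (hn m hm).1.trans (hn m hm).2]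
  grind

def flipAt (n : ℕ) : (ℕ → Bool) ≃ₜ (ℕ → Bool) where
  toFun x := Function.update x n (!x n)
  invFun x := Function.update x n (!x n)
  left_inv x := by simp
  right_inv x := by simp
  continuous_toFun :=
    continuous_id.update n ((continuous_of_discreteTopology (f := not)).comp (continuous_apply n))
  continuous_invFun :=
    continuous_id.update n ((continuous_of_discreteTopology (f := not)).comp (continuous_apply n))

theorem flipAt_apply_of_ne {n m : ℕ} (x : ℕ → Bool) (h : m ≠ n) : flipAt n x m = x m :=
  Function.update_of_ne h _ _

theorem flipAt_apply_self (n : ℕ) (x : ℕ → Bool) : flipAt n x n = !x n :=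
  Function.update_self _ _ _

theorem colorParity_flipAt (n : ℕ) (x : ℕ → Bool) : colorParity x (flipAt n x) = 1 := by
  rw [colorParity_eq_of_agree (n := n + 1) fun m hm => (flipAt_apply_of_ne x (by omega)).symm]
  simp only [prefixParity, Finset.sum_range_succ]
  rw [Finset.sum_congr rfl fun i hi => congrArg (fun b : Bool => (b.toNat : ZMod 2))
    (flipAt_apply_of_ne x (Finset.mem_range.1 hi).ne), flipAt_apply_self]
  cases x n <;> simp <;> grind

theorem c0_pair (x y : ℕ → Bool) :
    c0 {x, y} = if x ≠ y ∧ E0 x y ∧ Even (colorSum x y) then 0 else 1 := by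
  unfold c0
  congr 1
  refine propext ⟨?_, fun h => ⟨x, y, h.1, rfl, h.2⟩⟩
  rintro ⟨a, b, hab, hpair, hE, hEven⟩
  rw [← Finset.coe_inj, Finset.coe_pair, Finset.coe_pair, Set.pair_eq_pair_iff] at hpair
  rcases hpair with ⟨rfl, rfl⟩ | ⟨rfl, rfl⟩
  · exact ⟨hab, hE, hEven⟩
  · exact ⟨hab.symm, E0_equivalence.symm hE, colorSum_comm x y ▸ hEven⟩

theorem c0_pair_eq_zero_iff {x y : ℕ → Bool} (hxy : x ≠ y) (hE : E0 x y) :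
    c0 {x, y} = 0 ↔ colorParity x y = 0 := by
  rw [c0_pair, colorParity, ZMod.natCast_eq_zero_iff_even]
  simp [hxy, hE]

theorem isClosed_setOf_forall_ge_eq (n : ℕ) :
    IsClosed {p : (ℕ → Bool) × (ℕ → Bool) | ∀ m ≥ n, p.1 m = p.2 m} := by
  simp only [Set.ofPred_forall]
  exact isClosed_iInter fun m => isClosed_iInter fun _ => isClosed_eq (by fun_prop) (by fun_prop)

theorem measurableSet_setOf_E0 : MeasurableSet {p : (ℕ → Bool) × (ℕ → Bool) | E0 p.1 p.2} := by
  simp only [E0, Set.ofPred_exists]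
  exact .iUnion fun n => (isClosed_setOf_forall_ge_eq n).measurableSet

theorem measurable_colorSum : Measurable fun p : (ℕ → Bool) × (ℕ → Bool) => colorSum p.1 p.2 := by
  let pref (n : ℕ) (x : ℕ → Bool) : ℕ := ∑ i ∈ Finset.range n, (x i).toNat
  let D := {p : (ℕ → Bool) × (ℕ → Bool) // E0 p.1 p.2}
  have hfind : Measurable fun q : D =>
      pref (Nat.find q.2) q.1.1 + pref (Nat.find q.2) q.1.2 :=
    Measurable.find (f := fun n (q : D) => pref n q.1.1 + pref n q.1.2)
      (p := fun n (q : D) => ∀ m ≥ n, q.1.1 m = q.1.2 m) (fun n => by fun_prop)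
      (fun n => measurable_subtype_coe (isClosed_setOf_forall_ge_eq n).measurableSet) _
  exact hfind.dite measurable_const measurableSet_setOf_E0

theorem isBorelColoring_c0 : IsBorelColoring 2 c0 := by
  have hrange (v : Fin 2 → ℕ → Bool) : (Set.finite_range v).toFinset = {v 0, v 1} := by
    ext; simp [Fin.exists_fin_two, eq_comm]
  simp only [IsBorelColoring, hrange, c0_pair]
  have hpair : Measurable fun v : Fin 2 → ℕ → Bool => (v 0, v 1) :=
    (measurable_pi_apply 0).prodMk (measurable_pi_apply 1)
  exact Measurable.ite (hpair (measurableSet_diagonal.compl.inter (measurableSet_setOf_E0.inter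
    (measurable_colorSum (.of_discrete (s := {k : ℕ | Even k})))))) measurable_const
    measurable_const

theorem BaireMeasurableSet.exists_isOpen_isMeagre_inter_or_diff {X : Type*} [TopologicalSpace X]
    [Nonempty X] {A : Set X} (hA : BaireMeasurableSet A) :
    ∃ U : Set X, IsOpen U ∧ U.Nonempty ∧ (IsMeagre (U ∩ A) ∨ IsMeagre (U \ A)) := by
  obtain ⟨U, hU, hAU⟩ := hA.residualEq_isOpen
  have hAU' := Filter.eventuallyEq_set.1 hAU
  rcases U.eq_empty_or_nonempty with rfl | hne
  · refine ⟨Set.univ, isOpen_univ, Set.univ_nonempty, .inl ?_⟩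
    exact hAU'.mono fun x hx hxA => (hx.1 hxA.2).elim
  · exact ⟨U, hU, hne, .inr (hAU'.mono fun x hx hxUA => hxUA.2 (hx.2 hxUA.1))⟩

theorem not_baireMeasurableSet_of_forall_exists_homeomorph {X : Type*} [TopologicalSpace X]
    [BaireSpace X] [Nonempty X] {A : Set X}
    (h : ∀ U : Set X, IsOpen U → U.Nonempty →
      ∃ V ⊆ U, IsOpen V ∧ V.Nonempty ∧ ∃ f : X ≃ₜ X, f ⁻¹' V = V ∧ f ⁻¹' A = Aᶜ) :
    ¬ BaireMeasurableSet A := by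
  intro hA
  obtain ⟨U, hU, hUne, hUA⟩ := hA.exists_isOpen_isMeagre_inter_or_diff
  obtain ⟨V, hVU, hV, hVne, f, hfV, hfA⟩ := h U hU hUne
  have hpre {s : Set X} (hs : IsMeagre s) : IsMeagre (f ⁻¹' s) :=
    hs.preimage_of_isOpenMap f.continuous f.isOpenMap
  have hinter : f ⁻¹' (V ∩ A) = V \ A := by rw [Set.preimage_inter, hfV, hfA, Set.sdiff_eq]
  have hdiff : f ⁻¹' (V \ A) = V ∩ A := by
    rw [Set.sdiff_eq, Set.preimage_inter, Set.preimage_compl, hfV, hfA, compl_compl]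
  have hboth : IsMeagre (V ∩ A) ∧ IsMeagre (V \ A) := by
    rcases hUA with hUA | hUA
    · have := hUA.mono (Set.inter_subset_inter_left A hVU)
      exact ⟨this, hinter ▸ hpre this⟩
    · have := hUA.mono (Set.sdiff_subset_sdiff_left hVU)
      exact ⟨hdiff ▸ hpre this, this⟩
  exact not_isMeagre_of_isOpen hV hVne (Set.inter_union_sdiff V A ▸ hboth.1.union hboth.2)

theorem exists_subset_preimage_flipAt_eq {U : Set (ℕ → Bool)} (hU : IsOpen U) (hne : U.Nonempty) :
    ∃ V ⊆ U, IsOpen V ∧ V.Nonempty ∧ ∃ n, flipAt n ⁻¹' V = V := by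
  obtain ⟨x, hx⟩ := hne
  obtain ⟨I, u, hu, hIU⟩ := isOpen_pi_iff.1 hU x hx
  obtain ⟨n, hn⟩ := Infinite.exists_notMem_finset I
  refine ⟨(I : Set ℕ).pi u, hIU, isOpen_set_pi I.finite_toSet fun i hi => (hu i hi).1,
    ⟨x, fun i hi => (hu i hi).2⟩, n, ?_⟩
  ext y
  simp only [Set.mem_preimage, Set.mem_pi, Finset.mem_coe]
  exact forall₂_congr fun i hi => by rw [flipAt_apply_of_ne y (ne_of_mem_of_not_mem hi hn)]

theorem not_measurableSet_of_forall_preimage_flipAt_eq_compl {A : Set (ℕ → Bool)}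
    (hA : ∀ n, flipAt n ⁻¹' A = Aᶜ) : ¬ MeasurableSet A := fun hm =>
  not_baireMeasurableSet_of_forall_exists_homeomorph (fun U hU hne => by
    obtain ⟨V, hVU, hV, hVne, n, hnV⟩ := exists_subset_preimage_flipAt_eq hU hne
    exact ⟨V, hVU, hV, hVne, flipAt n, hnV, hA n⟩) hm.baireMeasurableSet

namespace IsMonochromaticReduction

variable {S : (ℕ → Bool) → ℕ → ℕ → Bool}

theorem colorParity_eq_zero (hS : IsMonochromaticReduction E0 2 c0 S) (x : ℕ → Bool) {i j : ℕ}
    (hij : i ≠ j) : colorParity (S x i) (S x j) = 0 := by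
  obtain ⟨hinj, hmono, -⟩ := hS
  obtain ⟨hE, a, ha⟩ := hmono x
  have hE' (i j : ℕ) : E0 (S x i) (S x j) :=
    E0_equivalence.trans (E0_equivalence.symm (hE i)) (hE j)
  have hcol {i j : ℕ} (hij : i ≠ j) : colorParity (S x i) (S x j) = 0 ↔ a = 0 := by
    rw [← c0_pair_eq_zero_iff ((hinj x).ne hij) (hE' i j),
      ha _ (Finset.card_pair ((hinj x).ne hij))]
    simp [Set.insert_subset_iff]
  refine (hcol hij).2 (by_contra fun ha0 => ?_)
  have hodd {i j : ℕ} (hij : i ≠ j) : colorParity (S x i) (S x j) = 1 :=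
    (by decide : ∀ p : ZMod 2, p ≠ 0 → p = 1) _ ((hcol hij).not.2 ha0)
  have hcocycle := colorParity_add_colorParity (hE' 0 1) (hE' 1 2)
  rw [hodd zero_ne_one, hodd (by decide : 1 ≠ 2), hodd (by decide : 0 ≠ 2)] at hcocycle
  exact absurd hcocycle (by decide)

theorem colorParity_flipAt (hS : IsMonochromaticReduction E0 2 c0 S) (n : ℕ) (x : ℕ → Bool) :
    colorParity x (S x 0) = colorParity (flipAt n x) (S (flipAt n x) 0) + 1 := by
  set y := flipAt n x
  have hxy : E0 x y := ⟨n + 1, fun m hm => (flipAt_apply_of_ne x (by omega)).symm⟩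
  obtain ⟨J, hJ⟩ := (hS.2.2 x y).1 hxy
  have hSJ : S x (J + 1) = S y (J + 1) := hJ _ (by omega)
  have hE {i : ℕ} : E0 x (S x i) := (hS.2.1 x).1 i
  have hE' {i : ℕ} : E0 x (S y i) := E0_equivalence.trans hxy ((hS.2.1 y).1 i)
  have hcls {z w : ℕ → Bool} (hz : E0 x z) (hw : E0 x w) : E0 z w :=
    E0_equivalence.trans (E0_equivalence.symm hz) hw
  calc colorParity x (S x 0)
      = colorParity x y + colorParity y (S y 0) + colorParity (S y 0) (S y (J + 1)) +
          colorParity (S x (J + 1)) (S x 0) := by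
        rw [colorParity_add_colorParity hxy (hcls hxy hE'),
          colorParity_add_colorParity hE' (hcls hE' hE'), hSJ,
          colorParity_add_colorParity hE' (hcls hE' hE)]
    _ = colorParity y (S y 0) + 1 := by
        rw [_root_.colorParity_flipAt, hS.colorParity_eq_zero y (by omega),
          hS.colorParity_eq_zero x (by omega)]
        ring

theorem preimage_flipAt_setOf_colorParity_eq_zero (hS : IsMonochromaticReduction E0 2 c0 S)
    (n : ℕ) :
    flipAt n ⁻¹' {x | colorParity x (S x 0) = 0} = {x | colorParity x (S x 0) = 0}ᶜ := by
  ext x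
  simp only [Set.mem_preimage, Set.mem_ofPred_eq, Set.mem_compl_iff, hS.colorParity_flipAt n x]
  exact (by decide : ∀ p : ZMod 2, p = 0 ↔ ¬p + 1 = 0) _

end IsMonochromaticReduction

theorem measurableSet_setOf_colorParity_eq_zero {S : (ℕ → Bool) → ℕ → ℕ → Bool}
    (hS : Measurable S) : MeasurableSet {x | colorParity x (S x 0) = 0} :=
  measurable_colorSum.comp (measurable_id.prodMk ((measurable_pi_apply 0).comp hS))
    (.of_discrete (s := {k : ℕ | (k : ZMod 2) = 0}))

/-- There is a Borel `E₀`-coloring of dimension `2` by `2` colors admitting no Borel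
monochromatic reduction to `E₁`. -/
theorem no_monochromatic_reduction_to_E1 :
    ∃ c : Finset (ℕ → Bool) → Fin 2, IsBorelColoring 2 c ∧
      ¬ ∃ S : (ℕ → Bool) → ℕ → (ℕ → Bool), Measurable S ∧
        IsMonochromaticReduction E0 2 c S := by
  refine ⟨c0, isBorelColoring_c0, ?_⟩
  rintro ⟨S, hSm, hS⟩
  exact not_measurableSet_of_forall_preimage_flipAt_eq_compl
    hS.preimage_flipAt_setOf_colorParity_eq_zero (measurableSet_setOf_colorParity_eq_zero hSm)
end
end
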